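/- For every natural number k, the iterated Petersen graph P_10^k is a frame of P_10^{k+1}. -/

import Mathlib

open SimpleGraph

/-- Degree of a vertex, via the cardinality of its neighbor set. -/
noncomputable def hdeg {V : Type*} (G : SimpleGraph V) (v : V) : ℕ :=
  {w | G.Adj v w}.ncard

/-- A cubic graph: every vertex has degree 3. -/
def IsCubic {V : Type*} (G : SimpleGraph V) : Prop := ∀ v, hdeg G v = 3

/-- A 2-connected graph: at least 3 vertices and deleting any vertex leaves it connected. -/
def TwoConnected {V : Type*} (G : SimpleGraph V) : Prop :=
  3 ≤ Nat.card V ∧ ∀ v : V, (G.induce {v}ᶜ).Connected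

/-- A 3-connected graph: at least 4 vertices and deleting any two vertices leaves it connected. -/
def ThreeConnected {V : Type*} (G : SimpleGraph V) : Prop :=
  4 ≤ Nat.card V ∧ ∀ v w : V, v ≠ w → (G.induce ({v, w} : Set V)ᶜ).Connected

/-- Edge list of the Petersen graph on `Fin 10` (vertex 9 has neighbors 4, 6, 7). -/
def petEdges : List (Fin 10 × Fin 10) :=
  [(0,1),(1,2),(2,3),(3,4),(4,0),(0,5),(1,6),(2,7),(3,8),(4,9),(5,7),(7,9),(9,6),(6,8),(8,5)]

/-- The Petersen graph `P₁₀`. -/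
def Pet : SimpleGraph (Fin 10) := SimpleGraph.fromRel (fun a b => (a, b) ∈ petEdges)

/-- Edge list of `P = P₁₀ - z` on `Fin 9` (where `z` was vertex 9);
its three 2-valent vertices are 4, 6, 7. -/
def pEdges : List (Fin 9 × Fin 9) :=
  [(0,1),(1,2),(2,3),(3,4),(4,0),(0,5),(1,6),(2,7),(3,8),(5,7),(6,8),(8,5)]

/-- The graph `P = P₁₀ - z`, the Petersen graph minus one vertex. -/
def Pgr : SimpleGraph (Fin 9) := SimpleGraph.fromRel (fun a b => (a, b) ∈ pEdges)

/-- The three 2-valent vertices of `P` (as targets of the port assignment). -/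
def portIdx : ℕ → Fin 9
  | 0 => 4
  | 1 => 6
  | _ => 7

/-- Port assignment: to which 2-valent vertex of the copy of `P` replacing `u` the
neighbor `v` of `u` gets attached (neighbors are ordered by the injective encoding `enc`). -/
noncomputable def port {V : Type*} (G : SimpleGraph V) (enc : V → ℕ) (u v : V) : Fin 9 :=
  portIdx (Nat.card {w : V | G.Adj u w ∧ enc w < enc v})

/-- Simultaneous `P`-inflation at every vertex of `G`. -/
noncomputable def inflate {V : Type*} (G : SimpleGraph V) (enc : V → ℕ) :
    SimpleGraph (V × Fin 9) where
  Adj a b :=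
    (a.1 = b.1 ∧ Pgr.Adj a.2 b.2) ∨
    (G.Adj a.1 b.1 ∧ a.2 = port G enc a.1 b.1 ∧ b.2 = port G enc b.1 a.1)
  symm := ⟨by
    rintro a b (⟨h1, h2⟩ | ⟨h1, h2, h3⟩)
    · exact Or.inl ⟨h1.symm, h2.symm⟩
    · exact Or.inr ⟨h1.symm, h3, h2⟩⟩
  loopless := ⟨by
    rintro a (⟨-, h⟩ | ⟨h, -, -⟩)
    · exact Pgr.irrefl h
    · exact G.irrefl h⟩

/-- A graph bundled with an injective-style encoding of its vertices into `ℕ`. -/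
structure GE where
  V : Type
  G : SimpleGraph V
  enc : V → ℕ

/-- One round of simultaneous `P`-inflation. -/
noncomputable def step (A : GE) : GE :=
  ⟨A.V × Fin 9, inflate A.G A.enc, fun p => Nat.pair (A.enc p.1) p.2.val⟩

/-- The iterated Petersen graph `P₁₀ᵏ`. -/
noncomputable def ItP10 : ℕ → GE
  | 0 => ⟨Fin 10, Pet, Fin.val⟩
  | k + 1 => step (ItP10 k)

/-- The iterated graph `Pᵏ` (starting from `P = P₁₀ - z`). -/
noncomputable def ItP : ℕ → GE
  | 0 => ⟨Fin 9, Pgr, Fin.val⟩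
  | k + 1 => step (ItP k)

/-- The canonical copy of `P^{k-1}` in `P₁₀ᵏ` containing a given vertex,
recorded by the corresponding vertex of `P₁₀`. -/
noncomputable def baseOf : (k : ℕ) → (ItP10 k).V → Fin 10
  | 0 => id
  | k + 1 => fun p => baseOf k p.1

/-- The parameter `l(G)`: minimum over circuits `C` of the maximum over vertices `v`
of the distance `d(C, v)`. -/
noncomputable def ell {V : Type*} (G : SimpleGraph V) : ℕ :=
  sInf { n | ∃ (v : V) (w : G.Walk v v), w.IsCycle ∧ ∀ u : V, ∃ x ∈ w.support, G.dist x u ≤ n }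

/-- `M` is a matching of `G`: a set of edges of `G`, pairwise not sharing a vertex. -/
def IsMatchingSet {V : Type*} (G : SimpleGraph V) (M : Set (Sym2 V)) : Prop :=
  M ⊆ G.edgeSet ∧ ∀ e ∈ M, ∀ f ∈ M, e ≠ f → ∀ v : V, ¬(v ∈ e ∧ v ∈ f)

/-- Every connected component of `H` has an even number of vertices. -/
def EvenComponents {V : Type*} (H : SimpleGraph V) : Prop :=
  ∀ c : H.ConnectedComponent, Even c.supp.ncard

/-- An `f`-matching: a matching `M` such that every component of `G - M` is
2-connected and has an even number of vertices. -/
def IsFMatching {V : Type*} (G : SimpleGraph V) (M : Set (Sym2 V)) : Prop :=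
  IsMatchingSet G M ∧
    ∀ c : (G.deleteEdges M).ConnectedComponent,
      TwoConnected ((G.deleteEdges M).induce c.supp) ∧ Even c.supp.ncard

/-- A minimal edge cut of `G`: deleting it disconnects `G`, but deleting any
proper subset does not. -/
def IsMinEdgeCut {V : Type*} (G : SimpleGraph V) (E : Set (Sym2 V)) : Prop :=
  E ⊆ G.edgeSet ∧ ¬(G.deleteEdges E).Connected ∧
    ∀ F : Set (Sym2 V), F ⊂ E → (G.deleteEdges F).Connected

/-- `H` is a subdivision of `F`: the vertices of `F` embed into `H` and each edge of `F`
corresponds to a path in `H`, the paths being internally disjoint and covering `H`. -/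
def IsSubdivisionOf {W U : Type*} (H : SimpleGraph W) (F : SimpleGraph U) : Prop :=
  ∃ f : U ↪ W, ∃ p : ∀ u v : U, F.Adj u v → H.Walk (f u) (f v),
    (∀ u v h, (p u v h).IsPath) ∧
    (∀ u v h, ∀ w ∈ (p u v h).support, w ∈ Set.range f → w = f u ∨ w = f v) ∧
    (∀ e : Sym2 W, e ∈ H.edgeSet ↔ ∃ u v h, e ∈ (p u v h).edges) ∧
    (∀ w : W, w ∈ Set.range f ∨ ∃ u v h, w ∈ (p u v h).support) ∧
    (∀ u v h u' v' h', ∀ w : W,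
      w ∈ (p u v h).support → w ∈ (p u' v' h').support →
      w ∈ Set.range f ∨ (u = u' ∧ v = v') ∨ (u = v' ∧ v = u'))

/-- Each component of `F` is an even circuit or a 2-connected cubic graph. -/
def GoodFrameComponents {U : Type*} (F : SimpleGraph U) : Prop :=
  ∀ c : F.ConnectedComponent,
    ((F.induce c.supp).Connected ∧ (∀ v, hdeg (F.induce c.supp) v = 2) ∧ Even c.supp.ncard) ∨
    (TwoConnected (F.induce c.supp) ∧ IsCubic (F.induce c.supp))

/-- `F` is a frame of `G`. -/
def IsFrame {U V : Type*} (F : SimpleGraph U) (G : SimpleGraph V) : Prop :=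
  GoodFrameComponents F ∧
    ∃ H : SimpleGraph V, H ≤ G ∧ IsSubdivisionOf H F ∧ EvenComponents H

/-- A proper 3-edge-coloring of `G`. -/
def ProperEdgeColoring {V : Type*} (G : SimpleGraph V) (f : Sym2 V → Fin 3) : Prop :=
  ∀ u v w : V, G.Adj u v → G.Adj u w → v ≠ w → f s(u, v) ≠ f s(u, w)

/-- The spanning subgraph of edges whose color is different from `c`
(i.e. the union of the other two color classes). -/
def twoClassSub {V : Type*} (G : SimpleGraph V) (f : Sym2 V → Fin 3) (c : Fin 3) :
    SimpleGraph V where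
  Adj u v := G.Adj u v ∧ f s(u, v) ≠ c
  symm := ⟨by
    rintro u v ⟨h1, h2⟩
    exact ⟨h1.symm, by rwa [Sym2.eq_swap]⟩⟩
  loopless := ⟨fun v h => G.irrefl h.1⟩

/-- A Kotzig graph: a cubic graph with a proper 3-edge-coloring in which any two
color classes form a hamiltonian circuit. -/
def IsKotzig {V : Type*} (G : SimpleGraph V) : Prop :=
  IsCubic G ∧ ∃ f : Sym2 V → Fin 3, ProperEdgeColoring G f ∧
    ∀ c : Fin 3, (twoClassSub G f c).Connected ∧ ∀ v, hdeg (twoClassSub G f c) v = 2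

/-- The family `Fam` is an even subdivision-factor of `G`. -/
def IsEvenSubdivFactor {ι : Type*} (Fam : ι → Σ n : ℕ, SimpleGraph (Fin n))
    {V : Type*} (G : SimpleGraph V) : Prop :=
  ∃ H : SimpleGraph V, H ≤ G ∧ ∀ c : H.ConnectedComponent,
    Even c.supp.ncard ∧ ∃ i, IsSubdivisionOf (H.induce c.supp) (Fam i).2

/-! In the inflation of a cubic graph `G`, keep inside every copy of `P = P₁₀ - z` only a
spanning spider: a tree with centre `0` whose three legs end at the 2-valent vertices
`4, 6, 7`. Together with all edges between copies this is a spanning subgraph that subdivides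
`G`: the centre of the copy of `u` represents `u`, and an edge `uv` becomes leg, connecting
edge, leg. It is connected and has `9 |V|` vertices, so its only component is even. Inflation
by `P` keeps a graph cubic, 2-connected and of even order, so by induction from the Petersen
graph every `P₁₀ᵏ` is a single 2-connected cubic component of even order. -/

section Search

variable {V : Type*} [DecidableEq V] (G : SimpleGraph V) [DecidableRel G.Adj]

/-- One round of breadth-first search inside `s`. Iterating it certifies connectivity of small
graphs by `decide`, which Mathlib's walk-enumerating instance is far too slow for. -/
def growWithin (s A : Finset V) : Finset V :=
  A ∪ s.filter fun y => ∃ x ∈ A, G.Adj x y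

variable {G}

lemma reachable_of_mem_iterate_growWithin {s : Finset V} {r : V} (hr : r ∈ s) :
    ∀ (n : ℕ) {y : V}, y ∈ (growWithin G s)^[n] {r} →
      ∃ hy : y ∈ s, (G.induce (s : Set V)).Reachable ⟨r, hr⟩ ⟨y, hy⟩
  | 0, y, hy => by
    obtain rfl := Finset.mem_singleton.mp hy
    exact ⟨hr, .rfl⟩
  | n + 1, y, hy => by
    rw [Function.iterate_succ_apply', growWithin, Finset.mem_union, Finset.mem_filter] at hy
    obtain hy | ⟨hys, x, hx, hxy⟩ := hy
    · exact reachable_of_mem_iterate_growWithin hr n hy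
    · obtain ⟨hxs, hrx⟩ := reachable_of_mem_iterate_growWithin hr n hx
      exact ⟨hys, hrx.trans (Adj.reachable (G := G.induce (s : Set V))
        (u := ⟨x, hxs⟩) (v := ⟨y, hys⟩) hxy)⟩

lemma induce_connected_of_iterate_growWithin {s : Finset V} (n : ℕ)
    (h : ∃ r ∈ s, (growWithin G s)^[n] {r} = s) : (G.induce (s : Set V)).Connected := by
  obtain ⟨r, hr, h⟩ := h
  rw [connected_iff_exists_forall_reachable]
  exact ⟨⟨r, hr⟩, fun ⟨y, hy⟩ => (reachable_of_mem_iterate_growWithin hr n (h.symm ▸ hy)).2⟩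

lemma induce_compl_connected_of_iterate_growWithin [Fintype V] {v : V} (n : ℕ)
    (h : ∃ r ∈ Finset.univ.erase v,
      (growWithin G (Finset.univ.erase v))^[n] {r} = Finset.univ.erase v) :
    (G.induce {v}ᶜ).Connected := by
  have hc := induce_connected_of_iterate_growWithin n h
  rwa [Finset.coe_erase, Finset.coe_univ, ← Set.compl_eq_univ_sdiff] at hc

end Search

section Connectivity

variable {V W : Type*} {G : SimpleGraph V} {G' : SimpleGraph W}

lemma hdeg_eq_degree (v : V) [Fintype (G.neighborSet v)] : hdeg G v = G.degree v := by
  rw [← card_neighborSet_eq_degree, ← Nat.card_eq_fintype_card]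
  rfl

lemma hdeg_iso (e : G ≃g G') (v : V) : hdeg G' (e v) = hdeg G v := by
  change (G'.neighborSet (e v)).ncard = (G.neighborSet v).ncard
  rw [← e.image_neighborSet, Set.ncard_image_of_injective _ e.injective]

lemma IsCubic.of_iso (e : G ≃g G') (h : IsCubic G) : IsCubic G' := fun w => by
  rw [← e.apply_symm_apply w, hdeg_iso]
  exact h _

lemma TwoConnected.of_iso (e : G ≃g G') (h : TwoConnected G) : TwoConnected G' := by
  refine ⟨(Nat.card_congr e.toEquiv) ▸ h.1, fun w => ?_⟩
  have hb : Set.BijOn e.symm {w}ᶜ {e.symm w}ᶜ :=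
    (Set.bijOn_singleton.mpr rfl).compl e.symm.bijective
  exact (e.symm.induce hb).connected_iff.mpr (h.2 _)

lemma TwoConnected.connected (h : TwoConnected G) : G.Connected := by
  have h3 := h.1
  have : Nonempty V := (Nat.card_pos_iff.mp (by omega)).1
  refine ⟨fun a b => ?_⟩
  have hlt : ({a, b} : Set V).ncard < (Set.univ : Set V).ncard := by
    have := Set.ncard_insert_le a {b}
    rw [Set.ncard_singleton] at this
    rw [Set.ncard_univ]
    omega
  obtain ⟨v, -, hv⟩ := Set.exists_mem_notMem_of_ncard_lt_ncard hlt
  simp only [Set.mem_insert_iff, Set.mem_singleton_iff, not_or] at hv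
  exact ((h.2 v).preconnected ⟨a, Ne.symm hv.1⟩ ⟨b, Ne.symm hv.2⟩).map (Embedding.induce _).toHom

lemma SimpleGraph.Connected.supp_eq_univ (hG : G.Connected) (c : G.ConnectedComponent) :
    c.supp = Set.univ := by
  induction c using ConnectedComponent.ind with
  | h v => exact Set.eq_univ_of_forall fun w => ConnectedComponent.eq.mpr (hG.preconnected w v)

lemma goodFrameComponents_of_twoConnected (h2 : TwoConnected G) (h3 : IsCubic G) :
    GoodFrameComponents G := fun c => by
  right
  rw [h2.connected.supp_eq_univ c]
  exact ⟨h2.of_iso (induceUnivIso G).symm, h3.of_iso (induceUnivIso G).symm⟩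

lemma evenComponents_of_connected (hG : G.Connected) (he : Even (Nat.card V)) :
    EvenComponents G := fun c => by
  rwa [hG.supp_eq_univ c, Set.ncard_univ]

lemma preconnected_of_reachable_fibers {K : SimpleGraph W} (π : V → W) (hK : K.Preconnected)
    (hfib : ∀ p q, π p = π q → G.Reachable p q)
    (hedge : ∀ c d, K.Adj c d → ∃ p q, π p = c ∧ π q = d ∧ G.Reachable p q) :
    G.Preconnected := by
  suffices key : ∀ {c d} (w : K.Walk c d) p q, π p = c → π q = d → G.Reachable p q from
    fun p q => (hK (π p) (π q)).elim fun w => key w p q rfl rfl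
  intro c d w
  induction w with
  | nil => exact fun p q hp hq => hfib p q (hp.trans hq.symm)
  | cons hcd w ih =>
    intro p q hp hq
    obtain ⟨p', q', hp', hq', hpq'⟩ := hedge _ _ hcd
    exact (hfib p p' (hp.trans hp'.symm)).trans (hpq'.trans (ih q' q hq' hq))

end Connectivity

section Ports

variable {V : Type*}

def ports : Finset (Fin 9) := {4, 6, 7}

lemma ncard_sep_lt_lt_of_lt {S : Set V} (hS : S.Finite) (f : V → ℕ) {v v' : V}
    (hv : v ∈ S) (h : f v < f v') : {w ∈ S | f w < f v}.ncard < {w ∈ S | f w < f v'}.ncard :=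
  Set.ncard_lt_ncard ⟨fun _ hw => ⟨hw.1, hw.2.trans h⟩, fun hsub => (hsub ⟨hv, h⟩).2.false⟩
    (hS.sep _)

lemma ncard_sep_lt_lt_ncard {S : Set V} (hS : S.Finite) (f : V → ℕ) {v : V} (hv : v ∈ S) :
    {w ∈ S | f w < f v}.ncard < S.ncard :=
  Set.ncard_lt_ncard ⟨fun _ hw => hw.1, fun hsub => (hsub hv).2.false⟩ hS

lemma injOn_ncard_sep_lt {S : Set V} (hS : S.Finite) {f : V → ℕ} (hf : Set.InjOn f S) :
    Set.InjOn (fun v => {w ∈ S | f w < f v}.ncard) S := by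
  intro v hv v' hv' heq
  rcases lt_trichotomy (f v) (f v') with h | h | h
  · exact absurd heq (ncard_sep_lt_lt_of_lt hS f hv h).ne
  · exact hf hv hv' h
  · exact absurd heq (ncard_sep_lt_lt_of_lt hS f hv' h).ne'

lemma portIdx_mapsTo : Set.MapsTo portIdx (Set.Iio 3) ports := by
  intro n (hn : n < 3)
  interval_cases n <;> decide

lemma portIdx_injOn : Set.InjOn portIdx (Set.Iio 3) := by
  intro m (hm : m < 3) n (hn : n < 3) h
  interval_cases m <;> interval_cases n <;> first | rfl | exact absurd h (by decide)

variable {G : SimpleGraph V} {enc : V → ℕ}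

lemma IsCubic.finite_neighborSet (hcub : IsCubic G) (u : V) : (G.neighborSet u).Finite :=
  Set.finite_of_ncard_ne_zero (ne_of_eq_of_ne (hcub u) three_ne_zero)

lemma port_bijOn (hinj : Function.Injective enc) (hcub : IsCubic G) (u : V) :
    Set.BijOn (port G enc u) (G.neighborSet u) ports := by
  have h3 : (G.neighborSet u).ncard = 3 := hcub u
  have hfin := hcub.finite_neighborSet u
  have hrank {v} (hv : v ∈ G.neighborSet u) :
      {w ∈ G.neighborSet u | enc w < enc v}.ncard ∈ Set.Iio 3 :=
    h3 ▸ ncard_sep_lt_lt_ncard hfin enc hv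
  have hmaps : Set.MapsTo (port G enc u) (G.neighborSet u) ports := fun v hv =>
    portIdx_mapsTo (hrank hv)
  have hinjOn : Set.InjOn (port G enc u) (G.neighborSet u) := fun v hv v' hv' h =>
    injOn_ncard_sep_lt hfin hinj.injOn hv hv' (portIdx_injOn (hrank hv) (hrank hv') h)
  refine ⟨hmaps, hinjOn, ?_⟩
  have himage : port G enc u '' G.neighborSet u = ports :=
    Set.eq_of_subset_of_ncard_le hmaps.image_subset
      (by rw [hinjOn.ncard_image, h3, Set.ncard_coe_finset]; rfl)
  exact himage.symm.subset

lemma ncard_port_fiber (hinj : Function.Injective enc) (hcub : IsCubic G) (u : V) (x : Fin 9) :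
    {v | G.Adj u v ∧ port G enc u v = x}.ncard = if x ∈ ports then 1 else 0 := by
  have hb := port_bijOn hinj hcub u
  split_ifs with hx
  · obtain ⟨v, hv, rfl⟩ := hb.surjOn hx
    exact Set.ncard_eq_one.mpr
      ⟨v, Set.ext fun v' => ⟨fun h => hb.injOn h.1 hv h.2, by rintro rfl; exact ⟨hv, rfl⟩⟩⟩
  · have hempty : {v | G.Adj u v ∧ port G enc u v = x} = ∅ :=
      Set.eq_empty_iff_forall_notMem.mpr fun v hv => hx (hv.2 ▸ hb.mapsTo hv.1)
    rw [hempty, Set.ncard_empty]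

end Ports

section Base

instance : DecidableRel Pet.Adj := fun a b => decidable_of_iff' _ (fromRel_adj _ a b)

instance : DecidableRel Pgr.Adj := fun a b => decidable_of_iff' _ (fromRel_adj _ a b)

lemma Pet_isCubic : IsCubic Pet := fun v => by
  rw [hdeg_eq_degree]
  revert v
  decide

lemma Pet_twoConnected : TwoConnected Pet :=
  ⟨by simp, fun v => induce_compl_connected_of_iterate_growWithin 4 (by revert v; decide)⟩

lemma hdeg_Pgr (x : Fin 9) : hdeg Pgr x = if x ∈ ports then 2 else 3 := by
  rw [hdeg_eq_degree]
  revert x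
  decide

lemma Pgr_induce_univ_connected : (Pgr.induce Set.univ).Connected := by
  have hc := induce_connected_of_iterate_growWithin (G := Pgr) (s := Finset.univ) 4 (by decide)
  rwa [Finset.coe_univ] at hc

lemma Pgr_induce_compl_connected (x : Fin 9) : (Pgr.induce {x}ᶜ).Connected :=
  induce_compl_connected_of_iterate_growWithin 4 (by revert x; decide)

lemma exists_mem_ports_ne (x : Fin 9) : ∃ t ∈ ports, t ≠ x := by
  revert x
  decide

end Base

section Inflation

variable {V : Type*} {G : SimpleGraph V} {enc : V → ℕ}

lemma neighborSet_inflate (u : V) (x : Fin 9) :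
    (inflate G enc).neighborSet (u, x) = (Prod.mk u) '' Pgr.neighborSet x ∪
      (fun v => (v, port G enc v u)) '' {v | G.Adj u v ∧ port G enc u v = x} := by
  ext ⟨v, y⟩
  simp only [mem_neighborSet, inflate, Set.mem_union, Set.mem_image, Set.mem_ofPred_eq,
    Prod.mk.injEq]
  constructor
  · rintro (⟨rfl, h⟩ | ⟨h, rfl, rfl⟩)
    exacts [Or.inl ⟨y, h, rfl, rfl⟩, Or.inr ⟨v, ⟨h, rfl⟩, rfl, rfl⟩]
  · rintro (⟨y, h, rfl, rfl⟩ | ⟨v, ⟨h, rfl⟩, rfl, rfl⟩)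
    exacts [Or.inl ⟨rfl, h⟩, Or.inr ⟨h, rfl, rfl⟩]

lemma hdeg_inflate {u : V} (hfin : (G.neighborSet u).Finite) (x : Fin 9) :
    hdeg (inflate G enc) (u, x) = hdeg Pgr x + {v | G.Adj u v ∧ port G enc u v = x}.ncard := by
  change ((inflate G enc).neighborSet (u, x)).ncard = _
  have hdisj : Disjoint ((Prod.mk u) '' Pgr.neighborSet x)
      ((fun v => (v, port G enc v u)) '' {v | G.Adj u v ∧ port G enc u v = x}) := by
    refine Set.disjoint_left.mpr ?_
    rintro _ ⟨y, -, rfl⟩ ⟨v, ⟨huv, -⟩, hv⟩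
    exact G.ne_of_adj huv (congrArg Prod.fst hv).symm
  rw [neighborSet_inflate, Set.ncard_union_eq hdisj (Set.toFinite _)
      ((hfin.subset fun _ h => h.1).image _),
    Set.ncard_image_of_injective _ (Prod.mk_right_injective u),
    Set.ncard_image_of_injective _ fun v w h => congrArg Prod.fst h]
  rfl

lemma inflate_isCubic (hinj : Function.Injective enc) (hcub : IsCubic G) :
    IsCubic (inflate G enc) := by
  rintro ⟨u, x⟩
  rw [hdeg_inflate (hcub.finite_neighborSet u), hdeg_Pgr, ncard_port_fiber hinj hcub]
  split_ifs <;> rfl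

lemma inflate_induce_prod_preconnected (u : V) {s : Set (Fin 9)}
    (hs : (Pgr.induce s).Preconnected) :
    ((inflate G enc).induce ({u} ×ˢ s)).Preconnected := by
  let φ : Pgr.induce s →g (inflate G enc).induce ({u} ×ˢ s) :=
    { toFun := fun z => ⟨(u, z), rfl, z.2⟩
      map_rel' := fun h => Or.inl ⟨rfl, h⟩ }
  refine hs.map φ ?_
  rintro ⟨⟨c, z⟩, rfl, hz⟩
  exact ⟨⟨z, hz⟩, rfl⟩

lemma inflate_induce_preimage_preconnected {s : Set V} (hs : (G.induce s).Preconnected) :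
    ((inflate G enc).induce (Prod.fst ⁻¹' s)).Preconnected := by
  refine preconnected_of_reachable_fibers (K := G.induce s) (fun p => ⟨p.1.1, p.2⟩) hs ?_ ?_
  · rintro ⟨⟨c, x⟩, hc⟩ ⟨⟨d, y⟩, _⟩ hcd
    obtain rfl : c = d := congrArg Subtype.val hcd
    have hsub : {c} ×ˢ Set.univ ⊆ (Prod.fst ⁻¹' s : Set (V × Fin 9)) := by
      rintro _ ⟨rfl, -⟩
      exact hc
    exact (inflate_induce_prod_preconnected c Pgr_induce_univ_connected.preconnected
      ⟨(c, x), rfl, trivial⟩ ⟨(c, y), rfl, trivial⟩).map (induceHomOfLE _ hsub).toHom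
  · rintro ⟨c, hc⟩ ⟨d, hd⟩ hcd
    exact ⟨⟨(c, port G enc c d), hc⟩, ⟨(d, port G enc d c), hd⟩, rfl, rfl,
      Adj.reachable (G := (inflate G enc).induce _) (Or.inr ⟨hcd, rfl, rfl⟩)⟩

/-- Removing `(u, x)` leaves the copies of `P` at the other vertices, connected through
`G - u`, and the copy of `P - x` at `u`, attached to them through a port other than `x`. -/
lemma inflate_twoConnected (hinj : Function.Injective enc) (hcub : IsCubic G)
    (h2 : TwoConnected G) : TwoConnected (inflate G enc) := by
  refine ⟨?_, fun ⟨u, x⟩ => ?_⟩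
  · have := h2.1
    simp only [Nat.card_prod, Nat.card_eq_fintype_card, Fintype.card_fin]
    omega
  obtain ⟨t, ht, htx⟩ := exists_mem_ports_ne x
  obtain ⟨v, huv, rfl⟩ := (port_bijOn hinj hcub u).surjOn ht
  have hsplit : ({(u, x)}ᶜ : Set (V × Fin 9)) = Prod.fst ⁻¹' {u}ᶜ ∪ {u} ×ˢ {x}ᶜ := by
    ext ⟨c, z⟩
    simp only [Set.mem_compl_iff, Set.mem_singleton_iff, Prod.mk.injEq, Set.mem_union,
      Set.mem_preimage, Set.mem_prod]
    tauto
  rw [hsplit]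
  exact connected_induce_union (v := (v, port G enc v u)) (w := (u, port G enc u v))
    (inflate_induce_preimage_preconnected (h2.2 u).preconnected)
    (inflate_induce_prod_preconnected u (Pgr_induce_compl_connected x).preconnected)
    (G.ne_of_adj huv).symm ⟨rfl, htx⟩ (Or.inr ⟨huv.symm, rfl, rfl⟩)

end Inflation

section Spider

/-- A spanning tree of `P`: the centre `0` with legs `0-4`, `0-1-2-3-8-6` and `0-5-7`. -/
def spider : SimpleGraph (Fin 9) :=
  fromRel fun a b => (a, b) ∈ [(0, 4), (0, 1), (1, 2), (2, 3), (3, 8), (8, 6), (0, 5), (5, 7)]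

instance : DecidableRel spider.Adj := fun a b => decidable_of_iff' _ (fromRel_adj _ a b)

lemma spider_le_Pgr : spider ≤ Pgr := by
  intro x y
  revert x y
  decide

def arm : (t : Fin 9) → spider.Walk 0 t
  | 0 => .nil
  | 1 => .cons (by decide) .nil
  | 2 => .cons (by decide : spider.Adj 0 1) (.cons (by decide) .nil)
  | 3 => .cons (by decide : spider.Adj 0 1) (.cons (by decide : spider.Adj 1 2)
      (.cons (by decide) .nil))
  | 4 => .cons (by decide) .nil
  | 5 => .cons (by decide) .nil
  | 6 => .cons (by decide : spider.Adj 0 1) (.cons (by decide : spider.Adj 1 2)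
      (.cons (by decide : spider.Adj 2 3) (.cons (by decide : spider.Adj 3 8)
      (.cons (by decide) .nil))))
  | 7 => .cons (by decide : spider.Adj 0 5) (.cons (by decide) .nil)
  | 8 => .cons (by decide : spider.Adj 0 1) (.cons (by decide : spider.Adj 1 2)
      (.cons (by decide : spider.Adj 2 3) (.cons (by decide) .nil)))

/-- The port at the end of the leg through `x`; meaningless for the centre `x = 0`. -/
def legOf : Fin 9 → Fin 9
  | 4 => 4
  | 5 | 7 => 7
  | _ => 6

lemma arm_support_nodup : ∀ t, (arm t).support.Nodup := by
  decide

lemma legOf_eq_of_mem_support_arm :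
    ∀ t ∈ ports, ∀ x ∈ (arm t).support, x ≠ 0 → legOf x = t := by
  decide

lemma mem_support_arm_legOf :
    ∀ x : Fin 9, x ≠ 0 → legOf x ∈ ports ∧ x ∈ (arm (legOf x)).support := by
  decide

lemma exists_mem_edges_arm_of_adj :
    ∀ x y : Fin 9, spider.Adj x y → ∃ t ∈ ports, s(x, y) ∈ (arm t).edges := by
  decide

end Spider

section SpiderInflation

variable {V : Type*} (G : SimpleGraph V) (enc : V → ℕ)

noncomputable def spiderInflate : SimpleGraph (V × Fin 9) where
  Adj a b :=
    (a.1 = b.1 ∧ spider.Adj a.2 b.2) ∨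
    (G.Adj a.1 b.1 ∧ a.2 = port G enc a.1 b.1 ∧ b.2 = port G enc b.1 a.1)
  symm := ⟨by
    rintro a b (⟨h1, h2⟩ | ⟨h1, h2, h3⟩)
    · exact Or.inl ⟨h1.symm, h2.symm⟩
    · exact Or.inr ⟨h1.symm, h3, h2⟩⟩
  loopless := ⟨by
    rintro a (⟨-, h⟩ | ⟨h, -, -⟩)
    · exact spider.irrefl h
    · exact G.irrefl h⟩

noncomputable def spiderCopy (u : V) : spider →g spiderInflate G enc where
  toFun z := (u, z)
  map_rel' h := Or.inl ⟨rfl, h⟩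

noncomputable def armIn (u : V) (t : Fin 9) : (spiderInflate G enc).Walk (u, 0) (u, t) :=
  (arm t).map (spiderCopy G enc u)

variable {G enc} {u v : V}

lemma spiderInflate_le_inflate : spiderInflate G enc ≤ inflate G enc := by
  rintro a b (⟨h1, h2⟩ | h)
  exacts [Or.inl ⟨h1, spider_le_Pgr h2⟩, Or.inr h]

lemma spiderInflate_adj_port (h : G.Adj u v) :
    (spiderInflate G enc).Adj (u, port G enc u v) (v, port G enc v u) :=
  Or.inr ⟨h, rfl, rfl⟩

lemma support_armIn (t : Fin 9) :
    (armIn G enc u t).support = (arm t).support.map (Prod.mk u) :=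
  Walk.support_map _ _

lemma edges_armIn (t : Fin 9) :
    (armIn G enc u t).edges = (arm t).edges.map (Sym2.map (Prod.mk u)) :=
  Walk.edges_map _ _

lemma spiderInflate_connected (hG : G.Connected) : (spiderInflate G enc).Connected := by
  have : Nonempty (V × Fin 9) := ⟨(hG.nonempty.some, 0)⟩
  refine ⟨preconnected_of_reachable_fibers Prod.fst hG.preconnected ?_ ?_⟩
  · rintro ⟨c, x⟩ ⟨d, y⟩ (rfl : c = d)
    exact ⟨(armIn G enc c x).reverse.append (armIn G enc c y)⟩
  · exact fun c d h => ⟨_, _, rfl, rfl, (spiderInflate_adj_port h).reachable⟩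

variable (enc) in
noncomputable def edgePath (h : G.Adj u v) :
    (spiderInflate G enc).Walk (u, 0) (v, 0) :=
  (armIn G enc u (port G enc u v)).append
    (.cons (spiderInflate_adj_port h) (armIn G enc v (port G enc v u)).reverse)

lemma support_edgePath (h : G.Adj u v) :
    (edgePath enc h).support = (arm (port G enc u v)).support.map (Prod.mk u) ++
      ((arm (port G enc v u)).support.map (Prod.mk v)).reverse := by
  rw [edgePath, Walk.support_append, Walk.support_cons, List.tail_cons, Walk.support_reverse,
    support_armIn, support_armIn]

lemma edges_edgePath (h : G.Adj u v) :
    (edgePath enc h).edges = (arm (port G enc u v)).edges.map (Sym2.map (Prod.mk u)) ++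
      s((u, port G enc u v), (v, port G enc v u)) ::
        ((arm (port G enc v u)).edges.map (Sym2.map (Prod.mk v))).reverse := by
  rw [edgePath, Walk.edges_append, Walk.edges_cons, Walk.edges_reverse, edges_armIn,
    edges_armIn]

lemma mem_support_edgePath {h : G.Adj u v} {p : V × Fin 9} :
    p ∈ (edgePath enc h).support ↔ (p.1 = u ∧ p.2 ∈ (arm (port G enc u v)).support) ∨
      (p.1 = v ∧ p.2 ∈ (arm (port G enc v u)).support) := by
  obtain ⟨c, z⟩ := p
  simp only [support_edgePath, List.mem_append, List.mem_reverse, List.mem_map, Prod.mk.injEq]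
  constructor
  · rintro (⟨w, hw, rfl, rfl⟩ | ⟨w, hw, rfl, rfl⟩)
    exacts [Or.inl ⟨rfl, hw⟩, Or.inr ⟨rfl, hw⟩]
  · rintro (⟨rfl, hz⟩ | ⟨rfl, hz⟩)
    exacts [Or.inl ⟨z, hz, rfl, rfl⟩, Or.inr ⟨z, hz, rfl, rfl⟩]

lemma edgePath_isPath (h : G.Adj u v) : (edgePath enc h).IsPath := by
  refine Walk.IsPath.mk' ?_
  rw [support_edgePath]
  refine ((arm_support_nodup _).map (Prod.mk_right_injective u)).append
    (List.nodup_reverse.mpr ((arm_support_nodup _).map (Prod.mk_right_injective v))) ?_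
  rintro _ hp hq
  rw [List.mem_map] at hp
  rw [List.mem_reverse, List.mem_map] at hq
  obtain ⟨x, -, rfl⟩ := hp
  obtain ⟨y, -, hyx⟩ := hq
  exact G.ne_of_adj h (congrArg Prod.fst hyx).symm

lemma mem_edges_edgePath_of_mem_edges_arm (h : G.Adj u v) {x y : Fin 9}
    (hxy : s(x, y) ∈ (arm (port G enc u v)).edges) :
    s((u, x), (u, y)) ∈ (edgePath enc h).edges := by
  rw [edges_edgePath]
  exact List.mem_append_left _ (List.mem_map_of_mem hxy)

lemma mem_edges_edgePath_port (h : G.Adj u v) :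
    s((u, port G enc u v), (v, port G enc v u)) ∈ (edgePath enc h).edges := by
  rw [edges_edgePath]
  exact List.mem_append_right _ List.mem_cons_self

end SpiderInflation

section Subdivision

variable {V : Type*} {G : SimpleGraph V} {enc : V → ℕ}

lemma port_eq_legOf_of_mem_support_edgePath (hinj : Function.Injective enc) (hcub : IsCubic G)
    {u v : V} (h : G.Adj u v) {p : V × Fin 9} (hp : p ∈ (edgePath enc h).support)
    (hp0 : p.2 ≠ 0) :
    (p.1 = u ∧ port G enc u v = legOf p.2) ∨ (p.1 = v ∧ port G enc v u = legOf p.2) := by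
  rcases mem_support_edgePath.mp hp with ⟨hu, hmem⟩ | ⟨hv, hmem⟩
  · exact Or.inl ⟨hu, (legOf_eq_of_mem_support_arm _
      ((port_bijOn hinj hcub u).mapsTo h) _ hmem hp0).symm⟩
  · exact Or.inr ⟨hv, (legOf_eq_of_mem_support_arm _
      ((port_bijOn hinj hcub v).mapsTo h.symm) _ hmem hp0).symm⟩

/-- A vertex off the centres lies on one leg, and its port determines the edge of `G`. -/
lemma edgePath_internally_disjoint (hinj : Function.Injective enc) (hcub : IsCubic G)
    {u v u' v' : V} (h : G.Adj u v) (h' : G.Adj u' v') {p : V × Fin 9}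
    (hp : p ∈ (edgePath enc h).support) (hp' : p ∈ (edgePath enc h').support) (hp0 : p.2 ≠ 0) :
    (u = u' ∧ v = v') ∨ (u = v' ∧ v = u') := by
  obtain ⟨c, z⟩ := p
  have hinjOn := fun c => (port_bijOn hinj hcub c).injOn
  rcases port_eq_legOf_of_mem_support_edgePath hinj hcub h hp hp0 with ⟨rfl, e⟩ | ⟨rfl, e⟩ <;>
    rcases port_eq_legOf_of_mem_support_edgePath hinj hcub h' hp' hp0 with ⟨rfl, e'⟩ | ⟨rfl, e'⟩
  · exact Or.inl ⟨rfl, hinjOn c h h' (e.trans e'.symm)⟩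
  · exact Or.inr ⟨rfl, hinjOn c h h'.symm (e.trans e'.symm)⟩
  · exact Or.inr ⟨hinjOn c h.symm h' (e.trans e'.symm), rfl⟩
  · exact Or.inl ⟨hinjOn c h.symm h'.symm (e.trans e'.symm), rfl⟩

theorem spiderInflate_isSubdivisionOf (hinj : Function.Injective enc) (hcub : IsCubic G) :
    IsSubdivisionOf (spiderInflate G enc) G := by
  have hb := port_bijOn hinj hcub
  refine ⟨Function.Embedding.sectL V 0, fun u v h => edgePath enc h,
    fun u v h => edgePath_isPath h, ?_, fun e => ⟨fun he => ?_, ?_⟩, ?_, ?_⟩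
  · rintro u v h _ hp ⟨c, rfl⟩
    rcases mem_support_edgePath.mp hp with ⟨rfl, -⟩ | ⟨rfl, -⟩
    exacts [Or.inl rfl, Or.inr rfl]
  · induction e using Sym2.ind with
    | _ p q =>
      rcases p with ⟨a, x⟩
      rcases q with ⟨b, y⟩
      rcases he with ⟨hab, hxy⟩ | ⟨hab, hx, hy⟩
      · obtain rfl : a = b := hab
        obtain ⟨t, ht, hmem⟩ := exists_mem_edges_arm_of_adj x y hxy
        obtain ⟨v, hv, rfl⟩ := (hb a).surjOn ht
        exact ⟨a, v, hv, mem_edges_edgePath_of_mem_edges_arm hv hmem⟩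
      · obtain rfl : x = port G enc a b := hx
        obtain rfl : y = port G enc b a := hy
        exact ⟨a, b, hab, mem_edges_edgePath_port hab⟩
  · rintro ⟨u, v, h, he⟩
    exact (edgePath enc h).edges_subset_edgeSet he
  · rintro ⟨a, x⟩
    by_cases hx : x = 0
    · exact Or.inl ⟨a, by rw [hx]; rfl⟩
    obtain ⟨ht, hmem⟩ := mem_support_arm_legOf x hx
    obtain ⟨v, hv, hport⟩ := (hb a).surjOn ht
    exact Or.inr ⟨a, v, hv, mem_support_edgePath.mpr (Or.inl ⟨rfl, hport ▸ hmem⟩)⟩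
  · intro u v h u' v' h' p hp hp'
    by_cases hp0 : p.2 = 0
    · exact Or.inl ⟨p.1, Prod.ext rfl hp0.symm⟩
    exact Or.inr (edgePath_internally_disjoint hinj hcub h h' hp hp' hp0)

end Subdivision

structure GE.IsEvenTwoConnectedCubic (A : GE) : Prop where
  enc_injective : Function.Injective A.enc
  twoConnected : TwoConnected A.G
  isCubic : IsCubic A.G
  even_card : Even (Nat.card A.V)

lemma GE.IsEvenTwoConnectedCubic.step {A : GE} (h : A.IsEvenTwoConnectedCubic) :
    (step A).IsEvenTwoConnectedCubic where
  enc_injective p q hpq := by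
    obtain ⟨h1, h2⟩ := Nat.pair_eq_pair.mp hpq
    exact Prod.ext (h.enc_injective h1) (Fin.val_injective h2)
  twoConnected := inflate_twoConnected h.enc_injective h.isCubic h.twoConnected
  isCubic := inflate_isCubic h.enc_injective h.isCubic
  even_card := by
    change Even (Nat.card (A.V × Fin 9))
    simpa [Nat.card_prod] using h.even_card.mul_right 9

lemma isEvenTwoConnectedCubic_ItP10 : ∀ k, (ItP10 k).IsEvenTwoConnectedCubic
  | 0 => ⟨Fin.val_injective, Pet_twoConnected, Pet_isCubic,
      show Even (Nat.card (Fin 10)) from ⟨5, by simp⟩⟩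
  | k + 1 => (isEvenTwoConnectedCubic_ItP10 k).step

/-- `P₁₀ᵏ` is a frame of `P₁₀ᵏ⁺¹`. -/
theorem stmt_16 (k : ℕ) : IsFrame (ItP10 k).G (ItP10 (k + 1)).G := by
  obtain ⟨hinj, h2, hcub, -⟩ := isEvenTwoConnectedCubic_ItP10 k
  exact ⟨goodFrameComponents_of_twoConnected h2 hcub, spiderInflate _ (ItP10 k).enc,
    spiderInflate_le_inflate, spiderInflate_isSubdivisionOf hinj hcub,
    evenComponents_of_connected (spiderInflate_connected h2.connected)
      (isEvenTwoConnectedCubic_ItP10 (k + 1)).even_card⟩
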